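/- arXiv:1611.08293 — 4 statements merged into one kernel-verified Lean document; each statement's English description precedes it below -/
import Mathlib

section
/- For all real x, -log(cosh(x)) ≤ -x^2/2 + x^4. -/
theorem neg_log_cosh_le (x : ℝ) :
    -Real.log (Real.cosh x) ≤ -x ^ 2 / 2 + x ^ 4 := by
  have hx2 : (0:ℝ) ≤ x ^ 2 := sq_nonneg x
  -- cosh x ≥ 1 + x^2/2
  have hs : |x| / 2 ≤ Real.sinh (|x| / 2) :=
    Real.self_le_sinh_iff.2 (by positivity)
  have hsq : (x / 2) ^ 2 ≤ Real.sinh (|x| / 2) ^ 2 := by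
    have h0 : (0:ℝ) ≤ |x| / 2 := by positivity
    have := pow_le_pow_left₀ h0 hs 2
    calc (x/2)^2 = (|x|/2)^2 := by rw [div_pow, div_pow, sq_abs]
    _ ≤ _ := this
  have hcosh : 1 + x ^ 2 / 2 ≤ Real.cosh x := by
    have h2 : Real.cosh x = Real.cosh (2 * (|x| / 2)) := by
      rw [mul_div_cancel₀ _ (two_ne_zero), Real.cosh_abs]
    rw [h2, Real.cosh_two_mul, Real.cosh_sq]
    nlinarith [hsq]
  have hpos : (0:ℝ) < 1 + x ^ 2 / 2 := by positivity
  have hlog1 : Real.log (1 + x ^ 2 / 2) ≤ Real.log (Real.cosh x) :=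
    Real.log_le_log hpos hcosh
  have hlog2 : 1 - (1 + x ^ 2 / 2)⁻¹ ≤ Real.log (1 + x ^ 2 / 2) :=
    Real.one_sub_inv_le_log_of_pos hpos
  have key : x ^ 2 / 2 - x ^ 4 ≤ 1 - (1 + x ^ 2 / 2)⁻¹ := by
    have h1 : 1 - (1 + x ^ 2 / 2)⁻¹ = (x ^ 2 / 2) / (1 + x ^ 2 / 2) := by
      field_simp
      ring
    rw [h1, le_div_iff₀ hpos]
    nlinarith [sq_nonneg x, sq_nonneg (x ^ 2), pow_nonneg hx2 3]
  linarith
end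

section
/- For θ > 1, the equation z = tanh(θ z) has a unique strictly positive root m(θ), and 0 < m(θ) < 1. -/
open Real Set Filter Topology

lemma my_tanh_lt_one (x : ℝ) : Real.tanh x < 1 := by
  rw [Real.tanh_eq_sinh_div_cosh, div_lt_one (Real.cosh_pos x)]
  exact Real.sinh_lt_cosh x

lemma my_tanh_pos {x : ℝ} (hx : 0 < x) : 0 < Real.tanh x := by
  rw [Real.tanh_eq_sinh_div_cosh]
  exact div_pos (Real.sinh_pos_iff.2 hx) (Real.cosh_pos x)

lemma my_hasDerivAt_tanh (x : ℝ) : HasDerivAt Real.tanh (1 - Real.tanh x ^ 2) x := by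
  have heq : Real.tanh = fun y => Real.sinh y / Real.cosh y :=
    funext fun y => Real.tanh_eq_sinh_div_cosh y
  have h := (Real.hasDerivAt_sinh x).div (Real.hasDerivAt_cosh x) (Real.cosh_pos x).ne'
  rw [heq]
  refine h.congr_deriv ?_
  beta_reduce
  have hc := (Real.cosh_pos x).ne'
  field_simp

lemma my_continuous_tanh : Continuous Real.tanh := by
  have heq : Real.tanh = fun y => Real.sinh y / Real.cosh y :=
    funext fun y => Real.tanh_eq_sinh_div_cosh y
  rw [heq]
  exact Real.continuous_sinh.div Real.continuous_cosh fun x => (Real.cosh_pos x).ne'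

lemma my_strictConcave_tanh : StrictConcaveOn ℝ (Set.Ici (0:ℝ)) Real.tanh := by
  apply strictConcaveOn_of_deriv2_neg (convex_Ici 0) my_continuous_tanh.continuousOn
  intro x hx
  rw [interior_Ici] at hx
  have hd : deriv Real.tanh = fun y => 1 - Real.tanh y ^ 2 :=
    funext fun y => (my_hasDerivAt_tanh y).deriv
  have h2 : HasDerivAt (fun y => 1 - Real.tanh y ^ 2)
      (-(2 * Real.tanh x * (1 - Real.tanh x ^ 2))) x := by
    have := ((my_hasDerivAt_tanh x).pow 2).const_sub 1
    refine this.congr_deriv ?_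
    norm_num
  show deriv^[2] Real.tanh x < 0
  have hit : deriv^[2] Real.tanh x = deriv (deriv Real.tanh) x := rfl
  rw [hit, hd, h2.deriv]
  have h1 : 0 < Real.tanh x := my_tanh_pos hx
  have h3 : Real.tanh x < 1 := my_tanh_lt_one x
  nlinarith

theorem curie_weiss_low_temp_fixed_point (θ : ℝ) (hθ : 1 < θ) :
    (∃! z : ℝ, 0 < z ∧ z = Real.tanh (θ * z)) ∧
    ∀ z : ℝ, 0 < z → z = Real.tanh (θ * z) → z < 1 := by
  have hlt1 : ∀ z : ℝ, 0 < z → z = Real.tanh (θ * z) → z < 1 := by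
    intro z _ hz
    rw [hz]; exact my_tanh_lt_one _
  -- uniqueness helper: no two distinct positive roots
  have key : ∀ a b : ℝ, 0 < a → a < b → a = Real.tanh (θ * a) → b = Real.tanh (θ * b) → False := by
    intro a b ha hab haeq hbeq
    have hb : 0 < b := ha.trans hab
    set t : ℝ := a / b with ht
    have ht0 : 0 < t := div_pos ha hb
    have ht1 : t < 1 := (div_lt_one hb).2 hab
    have hsum : (1 - t) + t = 1 := by ring
    have hθb : (0:ℝ) < θ * b := mul_pos (by linarith) hb
    have hmem0 : (0:ℝ) ∈ Set.Ici (0:ℝ) := Set.mem_Ici.2 le_rfl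
    have hmemb : θ * b ∈ Set.Ici (0:ℝ) := le_of_lt hθb
    have hne : (0:ℝ) ≠ θ * b := hθb.ne
    have hconc := my_strictConcave_tanh.2 hmem0 hmemb hne (by linarith : (0:ℝ) < 1 - t) ht0 hsum
    simp only [smul_eq_mul, mul_zero, Real.tanh_zero] at hconc
    have harg : 0 + t * (θ * b) = θ * a := by
      rw [ht]; field_simp
      ring
    rw [harg] at hconc
    -- hconc : (1 - t) * 0 + t * tanh (θ * b) < tanh (θ * a)
    have : t * b = a := by rw [ht]; field_simp
    rw [← hbeq, ← haeq] at hconc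
    nlinarith
  constructor
  · -- existence
    set g : ℝ → ℝ := fun z => Real.tanh (θ * z) - z with hg
    have hg0 : g 0 = 0 := by simp [hg]
    have hgd : HasDerivAt g (θ - 1) 0 := by
      have h1 : HasDerivAt (fun z : ℝ => θ * z) θ 0 := by
        simpa using (hasDerivAt_id (0:ℝ)).const_mul θ
      have h2 : HasDerivAt (fun z => Real.tanh (θ * z)) ((1 - Real.tanh (θ * 0) ^ 2) * θ) 0 :=
        (my_hasDerivAt_tanh (θ * 0)).comp 0 h1
      have h3 := h2.sub (hasDerivAt_id (0:ℝ))
      exact h3.congr_deriv (by simp)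
    have hslope : Tendsto (slope g 0) (𝓝[≠] (0:ℝ)) (𝓝 (θ - 1)) :=
      hasDerivAt_iff_tendsto_slope.1 hgd
    have hpos : ∀ᶠ z in 𝓝[≠] (0:ℝ), 0 < slope g 0 z :=
      hslope.eventually (eventually_gt_nhds (by linarith))
    have hpos' : ∀ᶠ z in 𝓝[>] (0:ℝ), 0 < slope g 0 z :=
      hpos.filter_mono (nhdsWithin_mono 0 fun x hx => ne_of_gt hx)
    have hlt : ∀ᶠ z in 𝓝[>] (0:ℝ), z ∈ Set.Ioo (0:ℝ) 1 :=
      Filter.eventually_mem_set.2 (Ioo_mem_nhdsGT_of_mem (by norm_num : (0:ℝ) ∈ Set.Ico (0:ℝ) 1))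
    obtain ⟨z₀, hz₀s, hz₀m⟩ := (hpos'.and hlt).exists
    obtain ⟨hz₀0, hz₀1⟩ := hz₀m
    have hgz₀ : 0 < g z₀ := by
      have : slope g 0 z₀ = g z₀ / z₀ := by simp [slope_def_field, hg0]
      rw [this] at hz₀s
      exact (div_pos_iff.1 hz₀s).resolve_right (fun h => absurd hz₀0 (not_lt.2 h.2.le)) |>.1
    have hg1 : g 1 < 0 := by
      simp only [hg, mul_one]
      linarith [my_tanh_lt_one θ]
    have hcont : ContinuousOn g (Set.Icc z₀ 1) :=
      ((my_continuous_tanh.comp (continuous_const.mul continuous_id)).sub continuous_id).continuousOn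
    have hivt := intermediate_value_Icc' hz₀1.le hcont
    have h0mem : (0:ℝ) ∈ Set.Icc (g 1) (g z₀) := ⟨hg1.le, hgz₀.le⟩
    obtain ⟨m, hmmem, hmval⟩ := hivt h0mem
    have hm0 : 0 < m := lt_of_lt_of_le hz₀0 hmmem.1
    have hmeq : m = Real.tanh (θ * m) := by
      have : Real.tanh (θ * m) - m = 0 := hmval
      linarith
    refine ⟨m, ⟨hm0, hmeq⟩, ?_⟩
    intro y ⟨hy0, hyeq⟩
    rcases lt_trichotomy y m with h | h | h
    · exact absurd (key y m hy0 h hyeq hmeq) not_false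
    · exact h
    · exact absurd (key m y hm0 h hmeq hyeq) not_false
  · exact hlt1
end

section
/- For 0 ≤ θ ≤ 1, the only real solution of z = tanh(θ z) is z = 0. -/
/-!
Since `tanh` is odd and `sinh x = x cosh c < x cosh x` for some `0 < c < x` (mean value theorem),
`|tanh x| < |x|` for `x ≠ 0`. A nonzero solution of `z = tanh (θ z)` would then give
`|z| < θ |z| ≤ |z|`.
-/

namespace Real

theorem sinh_lt_mul_cosh {x : ℝ} (hx : 0 < x) : sinh x < x * cosh x := by
  obtain ⟨c, ⟨hc0, hcx⟩, hc⟩ := exists_deriv_eq_slope sinh hx continuous_sinh.continuousOn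
    differentiable_sinh.differentiableOn
  rw [deriv_sinh, sinh_zero, sub_zero, sub_zero, eq_div_iff hx.ne'] at hc
  have hcosh : cosh c < cosh x := cosh_lt_cosh.2 (by rwa [abs_of_pos hc0, abs_of_pos hx])
  rw [← hc, mul_comm]
  exact mul_lt_mul_of_pos_left hcosh hx

theorem tanh_pos {x : ℝ} (hx : 0 < x) : 0 < tanh x := by
  rw [tanh_eq_sinh_div_cosh]
  exact div_pos (sinh_pos_iff.2 hx) (cosh_pos x)

theorem tanh_lt_self {x : ℝ} (hx : 0 < x) : tanh x < x := by
  rw [tanh_eq_sinh_div_cosh, div_lt_iff₀ (cosh_pos x)]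
  exact sinh_lt_mul_cosh hx

theorem abs_tanh_lt_abs {x : ℝ} (hx : x ≠ 0) : |tanh x| < |x| := by
  wlog hpos : 0 < x generalizing x
  · simpa only [tanh_neg, abs_neg] using
      this (neg_ne_zero.2 hx) (neg_pos.2 (lt_of_le_of_ne (not_lt.1 hpos) hx))
  rw [abs_of_pos hpos, abs_of_pos (tanh_pos hpos)]
  exact tanh_lt_self hpos

end Real

theorem curie_weiss_high_temp_fixed_point (θ : ℝ) (hθ0 : 0 ≤ θ) (hθ1 : θ ≤ 1) :
    ∀ z : ℝ, z = Real.tanh (θ * z) → z = 0 := by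
  intro z hz
  by_contra hz0
  have hθz : θ * z ≠ 0 := fun h => hz0 (by rw [hz, h, Real.tanh_zero])
  refine lt_irrefl |z| ?_
  calc |z| = |Real.tanh (θ * z)| := by rw [← hz]
    _ < |θ * z| := Real.abs_tanh_lt_abs hθz
    _ = θ * |z| := by rw [abs_mul, abs_of_nonneg hθ0]
    _ ≤ |z| := mul_le_of_le_one_left (abs_nonneg z) hθ1
end

section
/- There exists a constant C > 0 such that for all m ≥ 0, s ∈ ℕ with 1 ≤ s ≤ n, and B > 0: if m satisfies m - tanh(m) = (s/n)(tanh(m + B) - tanh(m)), then m - tanh(m) ≥ C·(s/n)·tanh(B). In particular, using m - tanh(m) ≤ m³, one gets m³ ≥ C·(s/n)·tanh(B). -/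
/-!
Writing `1 - tanh m = exp (-m) / cosh m` and
`tanh (m + B) - tanh m = sinh B / (cosh (m + B) cosh m)`, the inequality
`exp (-m) cosh (m + B) ≤ cosh B` for `m ≥ 0` gives `tanh (m + B) - tanh m ≥ (1 - tanh m) tanh B`.
The fixed-point equation forces `m ≤ tanh (m + B) < 1`, so `1 - tanh m ≥ 1 - tanh 1 > 0`, which
yields the lower bound with `C = 1 - tanh 1`. The cubic bound follows from `x - tanh x ≤ x ^ 3`,
i.e. `(1 - x ^ 2) cosh x ≤ 1`, which in turn comes from `exp (±x) (1 ∓ x) ≤ 1`.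
-/

open Real

namespace Real

theorem tanh_le_tanh {x y : ℝ} (h : x ≤ y) : tanh x ≤ tanh y := by
  rwa [← artanh_le_artanh_iff ⟨neg_one_lt_tanh x, tanh_lt_one x⟩ ⟨neg_one_lt_tanh y, tanh_lt_one y⟩,
    artanh_tanh, artanh_tanh]

theorem tanh_nonneg {x : ℝ} (hx : 0 ≤ x) : 0 ≤ tanh x := by
  simpa using tanh_le_tanh hx

theorem tanh_sub_tanh (x y : ℝ) : tanh x - tanh y = sinh (x - y) / (cosh x * cosh y) := by
  rw [tanh_eq_sinh_div_cosh, tanh_eq_sinh_div_cosh, sinh_sub]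
  field_simp

theorem one_sub_sq_mul_cosh_le_one (x : ℝ) : (1 - x ^ 2) * cosh x ≤ 1 := by
  have hexp : exp x * (1 - x) ≤ 1 := by
    simpa [← exp_add, neg_add_eq_sub] using
      mul_le_mul_of_nonneg_left (add_one_le_exp (-x)) (exp_pos x).le
  have hexp_neg : exp (-x) * (1 + x) ≤ 1 := by
    simpa [← exp_add, add_comm] using
      mul_le_mul_of_nonneg_left (add_one_le_exp x) (exp_pos (-x)).le
  rcases le_or_gt (x ^ 2) 1 with hx | hx
  · obtain ⟨hx₁, hx₂⟩ := abs_le.mp ((sq_le_one_iff_abs_le_one x).mp hx)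
    rw [cosh_eq]
    nlinarith [mul_le_mul_of_nonneg_left hexp (by linarith : (0 : ℝ) ≤ 1 + x),
      mul_le_mul_of_nonneg_left hexp_neg (by linarith : (0 : ℝ) ≤ 1 - x)]
  · nlinarith [cosh_pos x]

theorem sub_tanh_le_pow_three {x : ℝ} (hx : 0 ≤ x) : x - tanh x ≤ x ^ 3 := by
  suffices (x - x ^ 3) * cosh x ≤ sinh x by
    rw [tanh_eq_sinh_div_cosh]
    linarith [(le_div_iff₀ (cosh_pos x)).mpr this]
  calc (x - x ^ 3) * cosh x = x * ((1 - x ^ 2) * cosh x) := by ring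
    _ ≤ x := mul_le_of_le_one_right hx (one_sub_sq_mul_cosh_le_one x)
    _ ≤ sinh x := self_le_sinh_iff.mpr hx

theorem one_sub_tanh_mul_tanh_le_tanh_add_sub_tanh {m B : ℝ} (hm : 0 ≤ m) (hB : 0 ≤ B) :
    (1 - tanh m) * tanh B ≤ tanh (m + B) - tanh m := by
  have hcosh : exp (-m) * cosh (m + B) ≤ cosh B := by
    have hexp : exp (-m) * exp (-(m + B)) ≤ exp (-B) := by
      rw [← exp_add]
      exact exp_le_exp.mpr (by linarith)
    have hcancel : exp (-m) * exp (m + B) = exp B := by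
      rw [← exp_add]
      ring_nf
    rw [cosh_eq, cosh_eq]
    linarith
  have hsinh : 0 ≤ sinh B := sinh_nonneg_iff.mpr hB
  calc (1 - tanh m) * tanh B = exp (-m) * sinh B / (cosh m * cosh B) := by
        rw [← cosh_sub_sinh, tanh_eq_sinh_div_cosh, tanh_eq_sinh_div_cosh]
        field_simp
    _ ≤ sinh B / (cosh (m + B) * cosh m) := by
        rw [div_le_div_iff₀ (by positivity) (by positivity)]
        nlinarith [mul_le_mul_of_nonneg_left hcosh (mul_nonneg hsinh (cosh_pos m).le)]
    _ = tanh (m + B) - tanh m := by rw [tanh_sub_tanh, add_sub_cancel_left]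

end Real

section FixedPoint

variable {m B r : ℝ}

theorem lt_one_of_sub_tanh_eq_mul (hB : 0 ≤ B) (hr1 : r ≤ 1)
    (h : m - tanh m = r * (tanh (m + B) - tanh m)) : m < 1 := by
  have hgap : 0 ≤ tanh (m + B) - tanh m := sub_nonneg.mpr (tanh_le_tanh (by linarith))
  have : m - tanh m ≤ tanh (m + B) - tanh m := h ▸ mul_le_of_le_one_left hgap hr1
  linarith [tanh_lt_one (m + B)]

theorem one_sub_tanh_one_mul_le_sub_tanh (hm : 0 ≤ m) (hB : 0 ≤ B) (hr0 : 0 ≤ r) (hr1 : r ≤ 1)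
    (h : m - tanh m = r * (tanh (m + B) - tanh m)) :
    (1 - tanh 1) * r * tanh B ≤ m - tanh m := by
  have hm1 : tanh m ≤ tanh 1 := tanh_le_tanh (lt_one_of_sub_tanh_eq_mul hB hr1 h).le
  have hgap : (1 - tanh 1) * tanh B ≤ tanh (m + B) - tanh m :=
    (mul_le_mul_of_nonneg_right (by linarith) (tanh_nonneg hB)).trans
      (one_sub_tanh_mul_tanh_le_tanh_add_sub_tanh hm hB)
  rw [h]
  linarith [mul_le_mul_of_nonneg_left hgap hr0]

end FixedPoint

theorem fixed_point_signal_lower_bound :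
    ∃ C : ℝ, 0 < C ∧ ∀ (n s : ℕ) (m B : ℝ), 0 ≤ m → 1 ≤ s → s ≤ n → 0 < B →
      m - Real.tanh m = ((s : ℝ) / n) * (Real.tanh (m + B) - Real.tanh m) →
      m - Real.tanh m ≥ C * ((s : ℝ) / n) * Real.tanh B ∧
      m ^ 3 ≥ C * ((s : ℝ) / n) * Real.tanh B := by
  refine ⟨1 - tanh 1, sub_pos.mpr (tanh_lt_one 1), fun n s m B hm _ hsn hB h => ?_⟩
  have hr1 : (s : ℝ) / n ≤ 1 := div_le_one_of_le₀ (by exact_mod_cast hsn) n.cast_nonneg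
  have hlow := one_sub_tanh_one_mul_le_sub_tanh hm hB.le (by positivity) hr1 h
  exact ⟨hlow, hlow.trans (sub_tanh_le_pow_three hm)⟩
end
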